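/- arXiv:2108.08354 — 2 statements merged into one kernel-verified Lean document; each statement's English description precedes it below -/
import Mathlib

section
/- For any parameters σ, ρ, β > 0, the Lorenz system possesses an absorbing ball: there exists R > 0 such that for every r > 0 there exists T = T(r) ≥ 0 so that every solution (x, y, z) of the Lorenz system with x(0)² + y(0)² + (z(0) − ρ − σ)² ≤ r² satisfies x(t)² + y(t)² + (z(t) − ρ − σ)² ≤ R² for all t ≥ T. -/
/-!
The shifted energy `V = x² + y² + (z - ρ - σ)²` satisfies `V' = -2 (σ x² + y² + β z (z - ρ - σ))`,
and completing the square in `z` gives the dissipation inequality `V' ≤ -c V + β (ρ + σ)²` with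
`c = min (2σ) (min 2 β)`. Grönwall's inequality then yields
`V t ≤ K / c + (V 0 - K / c) e^{-c t}` with `K = β (ρ + σ)²`, so every solution enters the ball of
radius `√(K / c + 1)` once `r² e^{-c t} ≤ 1`.
-/

open Real

theorem le_div_add_mul_exp_of_hasDerivAt_le {f f' : ℝ → ℝ} {c K : ℝ} (hc : c ≠ 0)
    (hf : ∀ t ≥ (0:ℝ), HasDerivAt f (f' t) t) (bound : ∀ t ≥ (0:ℝ), f' t ≤ -c * f t + K)
    {t : ℝ} (ht : 0 ≤ t) :
    f t ≤ K / c + (f 0 - K / c) * exp (-c * t) := by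
  have gronwall := le_gronwallBound_of_liminf_deriv_right_le (f := f) (f' := f') (δ := f 0)
    (K := -c) (ε := K) (a := 0) (b := t)
    (fun s hs => (hf s hs.1).continuousAt.continuousWithinAt)
    (fun s hs _ hr => (hf s hs.1).hasDerivWithinAt.liminf_right_slope_le hr)
    le_rfl (fun s hs => bound s hs.1) t ⟨ht, le_rfl⟩
  rw [gronwallBound_of_K_ne_0 (neg_ne_zero.mpr hc), sub_zero, div_neg] at gronwall
  linarith

theorem mul_exp_neg_mul_le_one {a c t : ℝ} (ha : 0 < a) (hc : 0 < c) (ht : log a / c ≤ t) :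
    a * exp (-c * t) ≤ 1 := by
  have hlog : log a ≤ c * t := by rwa [div_le_iff₀ hc, mul_comm] at ht
  calc a * exp (-c * t) = exp (log a - c * t) := by
        rw [sub_eq_add_neg, exp_add, exp_log ha, neg_mul]
    _ ≤ 1 := exp_le_one_iff.mpr (by linarith)

section Lorenz

variable {σ ρ β : ℝ} {x y z : ℝ → ℝ} {t : ℝ}

theorem hasDerivAt_lorenz_energy (hx : HasDerivAt x (σ * (y t - x t)) t)
    (hy : HasDerivAt y (ρ * x t - y t - x t * z t) t)
    (hz : HasDerivAt z (x t * y t - β * z t) t) :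
    HasDerivAt (fun s => x s ^ 2 + y s ^ 2 + (z s - ρ - σ) ^ 2)
      (-2 * (σ * x t ^ 2 + y t ^ 2 + β * z t * (z t - ρ - σ))) t := by
  have hw : HasDerivAt (fun s => z s - ρ - σ) (x t * y t - β * z t) t :=
    (hz.sub_const ρ).sub_const σ
  refine (((hx.fun_pow 2).fun_add (hy.fun_pow 2)).fun_add (hw.fun_pow 2)).congr_deriv ?_
  push_cast
  ring

theorem lorenz_energy_dissipation {c : ℝ} (hβ : 0 ≤ β) (hcσ : c ≤ 2 * σ) (hc2 : c ≤ 2)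
    (hcβ : c ≤ β) (a b w : ℝ) :
    -2 * (σ * a ^ 2 + b ^ 2 + β * w * (w - ρ - σ)) ≤
      -c * (a ^ 2 + b ^ 2 + (w - ρ - σ) ^ 2) + β * (ρ + σ) ^ 2 := by
  -- the `w`-terms add up to `β w² + (β - c) (w - ρ - σ)²`
  nlinarith [mul_nonneg (sub_nonneg.mpr hcσ) (sq_nonneg a),
    mul_nonneg (sub_nonneg.mpr hc2) (sq_nonneg b),
    mul_nonneg (sub_nonneg.mpr hcβ) (sq_nonneg (w - ρ - σ)), mul_nonneg hβ (sq_nonneg w)]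

end Lorenz

theorem lorenz_absorbing_ball_general (σ ρ β : ℝ) (hσ : 0 < σ) (hβ : 0 < β) :
    ∃ R > (0:ℝ), ∀ r > (0:ℝ), ∃ T ≥ (0:ℝ), ∀ x y z : ℝ → ℝ,
      (∀ t ≥ (0:ℝ), HasDerivAt x (σ * (y t - x t)) t) →
      (∀ t ≥ (0:ℝ), HasDerivAt y (ρ * x t - y t - x t * z t) t) →
      (∀ t ≥ (0:ℝ), HasDerivAt z (x t * y t - β * z t) t) →
      (x 0) ^ 2 + (y 0) ^ 2 + (z 0 - ρ - σ) ^ 2 ≤ r ^ 2 →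
      ∀ t ≥ T, (x t) ^ 2 + (y t) ^ 2 + (z t - ρ - σ) ^ 2 ≤ R ^ 2 := by
  set c := min (2 * σ) (min 2 β)
  set K := β * (ρ + σ) ^ 2
  have hc : 0 < c := lt_min (by positivity) (lt_min two_pos hβ)
  have hKc : 0 ≤ K / c := by positivity
  refine ⟨√(K / c + 1), by positivity, fun r hr => ⟨max 0 (log (r ^ 2) / c), le_max_left _ _,
    fun x y z hx hy hz h0 t ht => ?_⟩⟩
  have decay := le_div_add_mul_exp_of_hasDerivAt_le hc.ne'
    (fun s hs => hasDerivAt_lorenz_energy (hx s hs) (hy s hs) (hz s hs))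
    (fun s _ => lorenz_energy_dissipation hβ.le (min_le_left _ _)
      ((min_le_right _ _).trans (min_le_left _ _)) ((min_le_right _ _).trans (min_le_right _ _))
      (x s) (y s) (z s))
    ((le_max_left _ _).trans ht)
  have small : r ^ 2 * exp (-c * t) ≤ 1 :=
    mul_exp_neg_mul_le_one (by positivity) hc ((le_max_right _ _).trans ht)
  calc x t ^ 2 + y t ^ 2 + (z t - ρ - σ) ^ 2
      ≤ K / c + (x 0 ^ 2 + y 0 ^ 2 + (z 0 - ρ - σ) ^ 2 - K / c) * exp (-c * t) := decay
    _ ≤ K / c + r ^ 2 * exp (-c * t) := by gcongr; linarith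
    _ ≤ √(K / c + 1) ^ 2 := by rw [sq_sqrt (by positivity)]; linarith

/-- **Absorbing ball for the Lorenz system.**
For any parameters `σ, ρ, β > 0`, there exists `R > 0` such that for every `r > 0`
there is a time `T ≥ 0` after which every solution of the Lorenz system starting in the
ball of radius `r` about `(0, 0, ρ + σ)` remains in the ball of radius `R`. -/
theorem lorenz_absorbing_ball (σ ρ β : ℝ) (hσ : 0 < σ) (hρ : 0 < ρ) (hβ : 0 < β) :
    ∃ R > (0:ℝ), ∀ r > (0:ℝ), ∃ T ≥ (0:ℝ), ∀ x y z : ℝ → ℝ,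
      (∀ t ≥ (0:ℝ), HasDerivAt x (σ * (y t - x t)) t) →
      (∀ t ≥ (0:ℝ), HasDerivAt y (ρ * x t - y t - x t * z t) t) →
      (∀ t ≥ (0:ℝ), HasDerivAt z (x t * y t - β * z t) t) →
      (x 0) ^ 2 + (y 0) ^ 2 + (z 0 - ρ - σ) ^ 2 ≤ r ^ 2 →
      ∀ t ≥ T, (x t) ^ 2 + (y t) ^ 2 + (z t - ρ - σ) ^ 2 ≤ R ^ 2 :=
  lorenz_absorbing_ball_general σ ρ β hσ hβ
end

section
/- Suppose the Lorenz system with parameters σ, ρ, β > 0 admits an absorbing-ball bound of radius R, and the nudged system has ρ̃ = ρ, β̃ = β, μ2 = μ3 = 0, with μ1 satisfying condition (M1). Then there exists a constant c1 > 0, depending only on R, ρ, σ, β, such that for all 0 ≤ t_0 ≤ t, 𝒦(t) ≤ 𝒦(t_0) e^{−(μ/2)(t − t_0)} + (c1/(μ1 + σ̃))(Δσ)². -/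
/-- `μ = min {μ1 + σ̃, μ2 + 1, μ3 + β̃}`. -/
noncomputable def muMin (σt βt μ1 μ2 μ3 : ℝ) : ℝ :=
  min (μ1 + σt) (min (μ2 + 1) (μ3 + βt))

/-- The a priori constant `K²`. -/
noncomputable def Ksq (σ ρ β σt ρt βt μ1 μ2 μ3 R : ℝ) : ℝ :=
  2 / muMin σt βt μ1 μ2 μ3 *
    (2 * R ^ 2 * (σt - σ) ^ 2 / (μ1 + σt) + 4 * R ^ 2 * (ρt - ρ) ^ 2 / (μ2 + 1)
      + 4 * (R ^ 2 + (ρ + σ) ^ 2) * (βt - β) ^ 2 / (μ3 + βt))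

/-- The a priori constant `L²`. -/
noncomputable def Lsq (σ ρ β σt ρt βt μ1 μ2 μ3 R : ℝ) : ℝ :=
  128 / muMin σt βt μ1 μ2 μ3 *
      ((R ^ 4 + (β ^ 2 + σ ^ 2) * R ^ 2 + β ^ 2 * (ρ + σ) ^ 2) / (μ2 + 1)
        + 3 * R ^ 2 * (R ^ 2 + 2 * (ρ + σ) ^ 2 + 1) / (μ3 + βt)) *
      Ksq σ ρ β σt ρt βt μ1 μ2 μ3 R
    + 2 / muMin σt βt μ1 μ2 μ3 *
      (24 * R ^ 2 * (R ^ 2 + (ρ + σ) ^ 2 + 1) * (σt - σ) ^ 2 / (μ1 + σt)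
        + 8 * σ ^ 2 * R ^ 2 * (ρt - ρ) ^ 2 / (μ2 + 1)
        + 16 * (R ^ 4 + β ^ 2 * R ^ 2 + β ^ 2 * (ρ + σ) ^ 2) * (βt - β) ^ 2 / (μ3 + βt))

/-- Condition (M1). -/
def CondM1 (σ ρ σt ρt βt μ1 μ2 μ3 R : ℝ) : Prop :=
  μ1 + σt ≥ 16 * (((σt - σ) ^ 2 + 3 * (σ + ρ) ^ 2 + 2 * R ^ 2) / (μ2 + 1)
      + R ^ 2 / (2 * (μ3 + βt)))
  ∧ μ2 + 1 ≥ 4 * (ρt - ρ) ^ 2 / (μ1 + σt)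

/-- Condition (M2). -/
def CondM2 (σ ρ β σt ρt βt μ1 μ2 μ3 R : ℝ) : Prop :=
  μ1 + σt ≥
    32 * ((σt - σ) ^ 2 + (ρt - ρ) ^ 2 + R ^ 2 + 2 * (ρ + σ) ^ 2) / (μ2 + 1)
    + 64 * (1 / (μ2 + 1) + 1 / (μ3 + βt)) * Ksq σ ρ β σt ρt βt μ1 μ2 μ3 R
    + 16 * R ^ 2 / (μ3 + βt)

/-- The energy `𝒦(t) = (u(t)² + v(t)² + w(t)²)/2` of the differences. -/
noncomputable def Kfun (x y z xt yt zt : ℝ → ℝ) (t : ℝ) : ℝ :=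
  ((xt t - x t) ^ 2 + (yt t - y t) ^ 2 + (zt t - z t) ^ 2) / 2

/-- The energy `ℒ(t) = (u'(t)² + v'(t)² + w'(t)²)/2` of the derivatives of the differences. -/
noncomputable def Lfun (x y z xt yt zt : ℝ → ℝ) (t : ℝ) : ℝ :=
  ((deriv (fun s => xt s - x s) t) ^ 2 + (deriv (fun s => yt s - y s) t) ^ 2
    + (deriv (fun s => zt s - z s) t) ^ 2) / 2

/-! With `ρ̃ = ρ`, `β̃ = β` and no nudging of `y, z`, the energy of the difference satisfies
`𝒦' = -(μ1 + σ̃) u² - v² - β w² + (σ̃ + ρ - z) u v + y u w + Δσ (y - x) u`.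
The absorbing ball bounds `x, y` and `σ̃ + ρ - z` by `R` and `|Δσ|`, so Young's inequality
absorbs the three cross terms into the dissipation, with (M1) paying for the `u²` terms; this
leaves `𝒦' ≤ -(μ/2) 𝒦 + 2 R² (Δσ)² / (μ1 + σ̃)`. Grönwall's inequality then gives the claim with
`c1 = 4 R² / μ`, and `μ ≥ min (48 (σ + ρ)²) (min 1 β)` by (M1) makes `c1` independent of
`σ̃` and `μ1`. -/

open Set Real

lemma le_gronwallBound_of_hasDerivAt {f f' : ℝ → ℝ} {δ K ε a b : ℝ}
    (hf : ∀ x ∈ Icc a b, HasDerivAt f (f' x) x) (ha : f a ≤ δ)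
    (bound : ∀ x ∈ Ico a b, f' x ≤ K * f x + ε) :
    ∀ x ∈ Icc a b, f x ≤ gronwallBound δ K ε (x - a) :=
  le_gronwallBound_of_liminf_deriv_right_le
    (fun x hx => (hf x hx).continuousAt.continuousWithinAt)
    (fun x hx _ hr => (hf x (Ico_subset_Icc_self hx)).hasDerivWithinAt.liminf_right_slope_le hr)
    ha bound

lemma le_mul_exp_add_div_of_hasDerivAt {f f' : ℝ → ℝ} {a b t₀ t : ℝ} (ha : 0 < a) (hb : 0 ≤ b)
    (ht : t₀ ≤ t) (hf : ∀ s ∈ Icc t₀ t, HasDerivAt f (f' s) s)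
    (bound : ∀ s ∈ Ico t₀ t, f' s ≤ -a * f s + b) :
    f t ≤ f t₀ * exp (-a * (t - t₀)) + b / a := by
  have h := le_gronwallBound_of_hasDerivAt hf le_rfl bound t ⟨ht, le_rfl⟩
  rw [gronwallBound_of_K_ne_0 (neg_ne_zero.2 ha.ne')] at h
  have hexp : exp (-a * (t - t₀)) ≤ 1 := exp_le_one_iff.2 (by nlinarith)
  calc f t ≤ f t₀ * exp (-a * (t - t₀)) + b / a * (1 - exp (-a * (t - t₀))) := by
        convert h using 2; ring
    _ ≤ f t₀ * exp (-a * (t - t₀)) + b / a := by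
        gcongr; nlinarith [exp_pos (-a * (t - t₀)), div_nonneg hb ha.le]

lemma mul_le_mul_sq_add_sq_div {a b c : ℝ} (hc : 0 < c) : a * b ≤ c * a ^ 2 + b ^ 2 / (4 * c) := by
  have h : c * a ^ 2 + b ^ 2 / (4 * c) - a * b = (2 * c * a - b) ^ 2 / (4 * c) := by
    field_simp; ring
  linarith [show 0 ≤ (2 * c * a - b) ^ 2 / (4 * c) by positivity]

lemma hasDerivAt_Kfun {x y z xt yt zt : ℝ → ℝ} {x' y' z' xt' yt' zt' s : ℝ}
    (hx : HasDerivAt x x' s) (hy : HasDerivAt y y' s) (hz : HasDerivAt z z' s)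
    (hxt : HasDerivAt xt xt' s) (hyt : HasDerivAt yt yt' s) (hzt : HasDerivAt zt zt' s) :
    HasDerivAt (Kfun x y z xt yt zt)
      ((xt s - x s) * (xt' - x') + (yt s - y s) * (yt' - y') + (zt s - z s) * (zt' - z')) s := by
  refine (((((hxt.fun_sub hx).fun_pow 2).fun_add ((hyt.fun_sub hy).fun_pow 2)).fun_add
    ((hzt.fun_sub hz).fun_pow 2)).div_const 2).congr_deriv ?_
  push_cast
  ring

lemma lorenz_energy_rate_le {σ ρ β R σt μ1 m x y z xt yt zt : ℝ} (hβ : 0 < β)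
    (hA₀ : 0 < μ1 + σt) (hA : 4 * R ^ 2 + 4 * (σt - σ) ^ 2 + 2 * (R ^ 2 / β) ≤ μ1 + σt)
    (hmA : m ≤ μ1 + σt) (hm1 : m ≤ 1) (hmβ : m ≤ β)
    (hball : x ^ 2 + y ^ 2 + (z - ρ - σ) ^ 2 ≤ R ^ 2) :
    (xt - x) * ((σt * (yt - xt) - μ1 * (xt - x)) - σ * (y - x))
      + (yt - y) * ((ρ * xt - yt - xt * zt) - (ρ * x - y - x * z))
      + (zt - z) * ((xt * yt - β * zt) - (x * y - β * z))
      ≤ -(m / 2) * (((xt - x) ^ 2 + (yt - y) ^ 2 + (zt - z) ^ 2) / 2)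
        + 2 * R ^ 2 * (σt - σ) ^ 2 / (μ1 + σt) := by
  set u := xt - x
  set v := yt - y
  set w := zt - z
  set A := μ1 + σt
  calc _ = -A * u ^ 2 - v ^ 2 - β * w ^ 2 + v * ((σt + ρ - z) * u) + w * (y * u)
        + u * ((σt - σ) * (y - x)) := by simp only [u, v, w, A]; ring
    _ ≤ _ := ?_
  have hy : y ^ 2 ≤ R ^ 2 := by nlinarith [sq_nonneg x, sq_nonneg (z - ρ - σ)]
  have hyx : (y - x) ^ 2 ≤ 2 * R ^ 2 := by nlinarith [sq_nonneg (x + y), sq_nonneg (z - ρ - σ)]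
  have hcoef : (σt + ρ - z) ^ 2 ≤ 2 * R ^ 2 + 2 * (σt - σ) ^ 2 := by
    nlinarith [sq_nonneg (σt - σ + (z - ρ - σ)), sq_nonneg x, sq_nonneg y]
  have huv : v * ((σt + ρ - z) * u) ≤ (2 * R ^ 2 + 2 * (σt - σ) ^ 2) * u ^ 2 + v ^ 2 / 4 := by
    have := mul_le_mul_sq_add_sq_div (a := v) (b := (σt + ρ - z) * u) (c := 1 / 4) (by norm_num)
    nlinarith [mul_le_mul_of_nonneg_right hcoef (sq_nonneg u)]
  have huw : w * (y * u) ≤ R ^ 2 / β * u ^ 2 + β / 4 * w ^ 2 := by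
    have := mul_le_mul_sq_add_sq_div (a := w) (b := y * u) (c := β / 4) (by positivity)
    have hyu : (y * u) ^ 2 / (4 * (β / 4)) ≤ R ^ 2 / β * u ^ 2 := by
      rw [mul_div_cancel₀ _ (four_ne_zero), mul_pow, div_mul_eq_mul_div]
      gcongr
    linarith
  have hΔσ : u * ((σt - σ) * (y - x)) ≤ A / 4 * u ^ 2 + 2 * R ^ 2 * (σt - σ) ^ 2 / A := by
    have := mul_le_mul_sq_add_sq_div (a := u) (b := (σt - σ) * (y - x)) (c := A / 4)
      (by positivity)
    have hb : ((σt - σ) * (y - x)) ^ 2 / (4 * (A / 4)) ≤ 2 * R ^ 2 * (σt - σ) ^ 2 / A := by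
      rw [mul_div_cancel₀ _ (four_ne_zero), mul_pow]
      gcongr ?_ / A
      nlinarith [mul_le_mul_of_nonneg_left hyx (sq_nonneg (σt - σ))]
    linarith
  have hu_coef : (2 * R ^ 2 + 2 * (σt - σ) ^ 2 + R ^ 2 / β + A / 4 + m / 4) * u ^ 2 ≤ A * u ^ 2 := by
    gcongr
    linarith
  nlinarith [sq_nonneg v, sq_nonneg w]

lemma CondM1.single_param_bound {σ ρ β σt μ1 R : ℝ} (h : CondM1 σ ρ σt ρ β μ1 0 0 R) :
    16 * ((σt - σ) ^ 2 + 3 * (σ + ρ) ^ 2 + 2 * R ^ 2) + 8 * (R ^ 2 / β) ≤ μ1 + σt := by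
  convert h.1 using 1
  ring

/-- **Corollary 4.1.**
In the special case `ρ̃ = ρ`, `β̃ = β`, `μ2 = μ3 = 0`, with the absorbing-ball bound of
radius `R` and condition (M1), there exists a constant `c1 > 0` depending only on
`R, ρ, σ, β` such that `𝒦(t) ≤ 𝒦(t₀) e^{−(μ/2)(t−t₀)} + (c1/(μ1 + σ̃))(Δσ)²`
for all `0 ≤ t₀ ≤ t`. -/
theorem lorenz_K_energy_decay_single_param (σ ρ β R : ℝ)
    (hσ : 0 < σ) (hρ : 0 < ρ) (hβ : 0 < β) :
    ∃ c1 > (0:ℝ), ∀ (σt μ1 : ℝ) (x y z xt yt zt : ℝ → ℝ),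
      0 ≤ σt → 0 ≤ μ1 →
      (∀ t ≥ (0:ℝ), HasDerivAt x (σ * (y t - x t)) t) →
      (∀ t ≥ (0:ℝ), HasDerivAt y (ρ * x t - y t - x t * z t) t) →
      (∀ t ≥ (0:ℝ), HasDerivAt z (x t * y t - β * z t) t) →
      (∀ t ≥ (0:ℝ), HasDerivAt xt (σt * (yt t - xt t) - μ1 * (xt t - x t)) t) →
      (∀ t ≥ (0:ℝ), HasDerivAt yt (ρ * xt t - yt t - xt t * zt t) t) →
      (∀ t ≥ (0:ℝ), HasDerivAt zt (xt t * yt t - β * zt t) t) →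
      (∀ t ≥ (0:ℝ), (x t) ^ 2 + (y t) ^ 2 + (z t - ρ - σ) ^ 2 ≤ R ^ 2) →
      CondM1 σ ρ σt ρ β μ1 0 0 R →
      ∀ t0 t : ℝ, 0 ≤ t0 → t0 ≤ t →
        Kfun x y z xt yt zt t ≤
          Kfun x y z xt yt zt t0 * Real.exp (-(muMin σt β μ1 0 0 / 2) * (t - t0))
          + c1 / (μ1 + σt) * (σt - σ) ^ 2 := by
  set μ₀ := min (48 * (σ + ρ) ^ 2) (min 1 β)
  have hμ₀ : 0 < μ₀ := lt_min (by positivity) (lt_min one_pos hβ)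
  refine ⟨(4 * R ^ 2 + 1) / μ₀, by positivity, ?_⟩
  intro σt μ1 x y z xt yt zt _ _ hx hy hz hxt hyt hzt hball hM1 t0 t ht0 ht
  have hA := hM1.single_param_bound
  have hRβ : 0 ≤ R ^ 2 / β := by positivity
  have hA_rate : 4 * R ^ 2 + 4 * (σt - σ) ^ 2 + 2 * (R ^ 2 / β) ≤ μ1 + σt := by
    nlinarith [sq_nonneg (σ + ρ)]
  have hA_μ₀ : 48 * (σ + ρ) ^ 2 ≤ μ1 + σt := by nlinarith [sq_nonneg (σt - σ)]
  have hA₀ : 0 < μ1 + σt := lt_of_lt_of_le (by positivity) hA_μ₀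
  set m := muMin σt β μ1 0 0
  have hm : m = min (μ1 + σt) (min 1 β) := by simp [m, muMin]
  have hμ₀m : μ₀ ≤ m := hm ▸ min_le_min_right _ hA_μ₀
  have hm₀ : 0 < m := hμ₀.trans_le hμ₀m
  have hdecay := le_mul_exp_add_div_of_hasDerivAt (f := Kfun x y z xt yt zt)
    (half_pos hm₀) (by positivity : 0 ≤ 2 * R ^ 2 * (σt - σ) ^ 2 / (μ1 + σt)) ht
    (fun s hs => have hs0 := ht0.trans hs.1
      hasDerivAt_Kfun (hx s hs0) (hy s hs0) (hz s hs0) (hxt s hs0) (hyt s hs0) (hzt s hs0))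
    (fun s hs => lorenz_energy_rate_le hβ hA₀ hA_rate (hm ▸ min_le_left _ _)
      (hm ▸ (min_le_right _ _).trans (min_le_left _ _))
      (hm ▸ (min_le_right _ _).trans (min_le_right _ _)) (hball s (ht0.trans hs.1)))
  have hc1 : 4 * R ^ 2 / m ≤ (4 * R ^ 2 + 1) / μ₀ :=
    div_le_div₀ (by positivity) (by linarith) hμ₀ hμ₀m
  calc Kfun x y z xt yt zt t
      ≤ Kfun x y z xt yt zt t0 * exp (-(m / 2) * (t - t0))
        + 4 * R ^ 2 / m * ((σt - σ) ^ 2 / (μ1 + σt)) := by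
        convert hdecay using 2; field_simp; ring
    _ ≤ Kfun x y z xt yt zt t0 * exp (-(m / 2) * (t - t0))
        + (4 * R ^ 2 + 1) / μ₀ * ((σt - σ) ^ 2 / (μ1 + σt)) := by
        gcongr
    _ = _ := by ring
end
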